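/- arXiv:1504.07491 — 3 statements merged into one kernel-verified Lean document; each statement's English description precedes it below -/
import Mathlib

section
/- Let 0 < μ_m < ⋯ < μ_1 and 0 < ε < 1 − max_{1 ≤ j < i ≤ m} (μ_i/μ_j). For indices i, j ∈ {1,…,m}, set ε_{ij} = 1 if i > j and ε_{ij} = −1 otherwise. For (x,ξ) in the triangle T, define the characteristic χ_{ij}(ν) = x + ε_{ij} μ_i ν, ζ_{ij}(ν) = ξ + ε_{ij} μ_j ν, terminating on the boundary of T at parameter ν^F. Then −ε_{ij}(μ_i − (1−ε)μ_j) > 0, and for every q ∈ ℕ, ∫_0^{ν^F} (χ_{ij}(ν) − (1−ε)ζ_{ij}(ν))^q dν ≤ (1/(−ε_{ij}(μ_i − (1−ε)μ_j))) · (x − (1−ε)ξ)^{q+1}/(q+1). -/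
/-! The integrand is affine in `ν`: `χ - (1 - ε) ζ = (x - (1 - ε) ξ) - K ν` with
`K = -ε_{ij} (μ_i - (1 - ε) μ_j)`. The sign convention makes `K > 0` (for `i ≤ j` because
`μ_i ≥ μ_j`, for `j < i` because of the bound on `ε`), so the integral is
`(A^{q+1} - (A - K ν^F)^{q+1}) / (K (q + 1))` with `A = x - (1 - ε) ξ`, and the subtracted
term is nonnegative because `χ - (1 - ε) ζ ≥ ε ζ ≥ 0` still holds at the endpoint. -/

theorem integral_sub_mul_pow_le {K A T : ℝ} (hK : 0 < K) (hT : 0 ≤ A - K * T) (q : ℕ) :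
    ∫ ν in (0:ℝ)..T, (A - K * ν) ^ q ≤ 1 / K * A ^ (q + 1) / (q + 1) := by
  rw [intervalIntegral.integral_comp_sub_mul (· ^ q) hK.ne', integral_pow, smul_eq_mul,
    mul_zero, sub_zero, one_div, mul_div_assoc]
  gcongr
  exact sub_le_self _ (pow_nonneg hT _)

theorem neg_sign_mul_sub_pos {ι : Type*} [LinearOrder ι] {μ : ι → ℝ} (hμpos : ∀ i, 0 < μ i)
    (hμ : Antitone μ) {ε : ℝ} (hε : 0 < ε) (hεmax : ∀ i j, j < i → ε < 1 - μ i / μ j)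
    (i j : ι) : 0 < -(if j < i then (1:ℝ) else -1) * (μ i - (1 - ε) * μ j) := by
  have hμj := hμpos j
  split_ifs with hji
  · have h := (div_lt_iff₀ hμj).mp (by linarith [hεmax i j hji] : μ i / μ j < 1 - ε)
    linarith
  · have h : μ j ≤ μ i := hμ (not_lt.mp hji)
    nlinarith

theorem stmt_6_general (m : ℕ) (μ : Fin m → ℝ)
    (hμpos : ∀ i, 0 < μ i)
    (hμdec : ∀ i j : Fin m, i < j → μ j < μ i)
    (ε : ℝ) (hε0 : 0 < ε)
    (hεmax : ∀ i j : Fin m, j < i → ε < 1 - μ i / μ j)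
    (i j : Fin m) (x ξ : ℝ)
    (eij : ℝ) (heij : eij = if j < i then (1:ℝ) else -1)
    (νF : ℝ) (hνF0 : 0 ≤ νF)
    (hInT : ∀ ν ∈ Set.Icc 0 νF,
      0 ≤ ξ + eij * μ j * ν ∧ ξ + eij * μ j * ν ≤ x + eij * μ i * ν ∧
        x + eij * μ i * ν ≤ 1) :
    0 < -eij * (μ i - (1 - ε) * μ j) ∧
    ∀ q : ℕ,
      ∫ ν in (0:ℝ)..νF, (x + eij * μ i * ν - (1 - ε) * (ξ + eij * μ j * ν)) ^ q ≤
        (1 / (-eij * (μ i - (1 - ε) * μ j))) * (x - (1 - ε) * ξ) ^ (q + 1) / (q + 1) := by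
  have hK : 0 < -eij * (μ i - (1 - ε) * μ j) :=
    heij ▸ neg_sign_mul_sub_pos hμpos (StrictAnti.antitone hμdec) hε0 hεmax i j
  obtain ⟨hζ, hζχ, -⟩ := hInT νF ⟨hνF0, le_rfl⟩
  have hend : 0 ≤ x - (1 - ε) * ξ - -eij * (μ i - (1 - ε) * μ j) * νF := by
    nlinarith [mul_nonneg hε0.le hζ]
  refine ⟨hK, fun q => ?_⟩
  calc ∫ ν in (0:ℝ)..νF, (x + eij * μ i * ν - (1 - ε) * (ξ + eij * μ j * ν)) ^ q
      = ∫ ν in (0:ℝ)..νF, (x - (1 - ε) * ξ - -eij * (μ i - (1 - ε) * μ j) * ν) ^ q := by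
        congr 1; ext ν; ring
    _ ≤ _ := integral_sub_mul_pow_le hK hend q

/-- Integral estimate along the characteristics of the L-kernels. With
0 < μ_m < ⋯ < μ_1, ε < 1 - max_{j<i} μ_i/μ_j, and the sign ε_{ij} = 1 for
i > j and -1 otherwise, one has -ε_{ij}(μ_i - (1-ε)μ_j) > 0 and the integral
of (χ - (1-ε)ζ)^q along the characteristic is bounded as stated.
(Indices increase: i < j in `Fin m` means μ j < μ i, i.e. i is the "faster"
index, matching the paper's ordering μ_1 > ⋯ > μ_m.) -/
theorem stmt_6 (m : ℕ) (μ : Fin m → ℝ)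
    (hμpos : ∀ i, 0 < μ i)
    (hμdec : ∀ i j : Fin m, i < j → μ j < μ i)
    (ε : ℝ) (hε0 : 0 < ε)
    (hεmax : ∀ i j : Fin m, j < i → ε < 1 - μ i / μ j)
    (hε1 : ε < 1)
    (i j : Fin m) (x ξ : ℝ)
    (hT : 0 ≤ ξ ∧ ξ ≤ x ∧ x ≤ 1)
    (eij : ℝ) (heij : eij = if j < i then (1:ℝ) else -1)
    (νF : ℝ) (hνF0 : 0 ≤ νF)
    (hInT : ∀ ν ∈ Set.Icc 0 νF,
      0 ≤ ξ + eij * μ j * ν ∧ ξ + eij * μ j * ν ≤ x + eij * μ i * ν ∧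
        x + eij * μ i * ν ≤ 1)
    (hBoundary : ξ + eij * μ j * νF = 0 ∨
      x + eij * μ i * νF = ξ + eij * μ j * νF ∨ x + eij * μ i * νF = 1) :
    0 < -eij * (μ i - (1 - ε) * μ j) ∧
    ∀ q : ℕ,
      ∫ ν in (0:ℝ)..νF, (x + eij * μ i * ν - (1 - ε) * (ξ + eij * μ j * ν)) ^ q ≤
        (1 / (-eij * (μ i - (1 - ε) * μ j))) * (x - (1 - ε) * ξ) ^ (q + 1) / (q + 1) :=
  stmt_6_general m μ hμpos hμdec ε hε0 hεmax i j x ξ eij heij νF hνF0 hInT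
end

section
/- With the hypotheses of the preceding characteristic estimate (0 < μ_m < ⋯ < μ_1 and 0 < ε < 1 − max_{j<i} μ_i/μ_j), for any (x,ξ) ∈ T and any 1 ≤ i, j ≤ m, the function ν ↦ χ_{ij}(x,ξ;ν) − (1−ε)ζ_{ij}(x,ξ;ν) is strictly decreasing on [0, ν^F], and in particular 0 ≤ χ^F_{ij}(x,ξ) − (1−ε)ζ^F_{ij}(x,ξ) ≤ x − (1−ε)ξ. -/
/-!
Along a characteristic the weighted coordinate `χ - (1 - ε) ζ` is affine in `ν` with slope
`e_{ij} (μ_i - (1 - ε) μ_j)`. For `j < i` the bound `ε < 1 - μ_i / μ_j` makes `μ_i - (1 - ε) μ_j`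
negative while `e_{ij} = 1`; for `i ≤ j` the ordering of the speeds gives `μ_j ≤ μ_i`, so the
bracket is positive while `e_{ij} = -1`. The upper bound is the value at `ν = 0`, and at the
terminal point `χ - (1 - ε) ζ = (χ - ζ) + ε ζ ≥ 0` since the point lies in the triangle.
-/

lemma strictAnti_const_add_mul {a c : ℝ} (hc : c < 0) : StrictAnti fun ν : ℝ => a + c * ν :=
  (strictAnti_mul_left hc).const_add a

lemma lt_one_sub_mul_of_lt_one_sub_div {a b ε : ℝ} (hb : 0 < b) (h : ε < 1 - a / b) :
    a < (1 - ε) * b := by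
  rwa [← div_lt_iff₀ hb, lt_sub_comm]

lemma one_sub_mul_lt_of_le {a b ε : ℝ} (hb : 0 < b) (hε : 0 < ε) (h : b ≤ a) :
    (1 - ε) * b < a := by
  nlinarith

lemma sub_one_sub_mul_nonneg {χ ζ ε : ℝ} (hζ : 0 ≤ ζ) (hζχ : ζ ≤ χ) (hε : 0 ≤ ε) :
    0 ≤ χ - (1 - ε) * ζ := by
  nlinarith

lemma characteristic_slope_neg {ι : Type*} [LinearOrder ι] {μ : ι → ℝ} (hμ : StrictAnti μ)
    {ε : ℝ} (hε : 0 < ε) {i j : ι} (hμj : 0 < μ j) (hεij : j < i → ε < 1 - μ i / μ j) :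
    (if j < i then (1 : ℝ) else -1) * (μ i - (1 - ε) * μ j) < 0 := by
  split_ifs with hji
  · linarith [lt_one_sub_mul_of_lt_one_sub_div hμj (hεij hji)]
  · linarith [one_sub_mul_lt_of_le hμj hε (hμ.antitone (not_lt.mp hji))]

theorem stmt_7_general (m : ℕ) (μ : Fin m → ℝ)
    (hμpos : ∀ i, 0 < μ i)
    (hμdec : ∀ i j : Fin m, i < j → μ j < μ i)
    (ε : ℝ) (hε0 : 0 < ε)
    (hεmax : ∀ i j : Fin m, j < i → ε < 1 - μ i / μ j)
    (i j : Fin m) (x ξ : ℝ)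
    (eij : ℝ) (heij : eij = if j < i then (1:ℝ) else -1)
    (νF : ℝ) (hνF0 : 0 ≤ νF)
    (hInT : ∀ ν ∈ Set.Icc 0 νF,
      0 ≤ ξ + eij * μ j * ν ∧ ξ + eij * μ j * ν ≤ x + eij * μ i * ν ∧
        x + eij * μ i * ν ≤ 1) :
    StrictAntiOn
      (fun ν => x + eij * μ i * ν - (1 - ε) * (ξ + eij * μ j * ν))
      (Set.Icc 0 νF) ∧
    0 ≤ x + eij * μ i * νF - (1 - ε) * (ξ + eij * μ j * νF) ∧
    x + eij * μ i * νF - (1 - ε) * (ξ + eij * μ j * νF) ≤ x - (1 - ε) * ξ := by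
  have hslope : eij * (μ i - (1 - ε) * μ j) < 0 :=
    heij ▸ characteristic_slope_neg hμdec hε0 (hμpos j) (hεmax i j)
  have hanti : StrictAntiOn (fun ν => x + eij * μ i * ν - (1 - ε) * (ξ + eij * μ j * ν))
      (Set.Icc 0 νF) := by
    convert (strictAnti_const_add_mul (a := x - (1 - ε) * ξ) hslope).strictAntiOn _ using 2
    ring
  have hνF : νF ∈ Set.Icc 0 νF := ⟨hνF0, le_rfl⟩
  obtain ⟨hζ, hζχ, -⟩ := hInT νF hνF
  refine ⟨hanti, sub_one_sub_mul_nonneg hζ hζχ hε0.le, ?_⟩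
  simpa using hanti.antitoneOn ⟨le_rfl, hνF0⟩ hνF hνF0

/-- Monotonicity of ν ↦ χ(ν) - (1-ε)ζ(ν) along the L-kernel characteristics:
it is strictly decreasing on [0, νF], and the terminal value satisfies
0 ≤ χF - (1-ε)ζF ≤ x - (1-ε)ξ. -/
theorem stmt_7 (m : ℕ) (μ : Fin m → ℝ)
    (hμpos : ∀ i, 0 < μ i)
    (hμdec : ∀ i j : Fin m, i < j → μ j < μ i)
    (ε : ℝ) (hε0 : 0 < ε)
    (hεmax : ∀ i j : Fin m, j < i → ε < 1 - μ i / μ j)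
    (hε1 : ε < 1)
    (i j : Fin m) (x ξ : ℝ)
    (hT : 0 ≤ ξ ∧ ξ ≤ x ∧ x ≤ 1)
    (eij : ℝ) (heij : eij = if j < i then (1:ℝ) else -1)
    (νF : ℝ) (hνF0 : 0 ≤ νF)
    (hInT : ∀ ν ∈ Set.Icc 0 νF,
      0 ≤ ξ + eij * μ j * ν ∧ ξ + eij * μ j * ν ≤ x + eij * μ i * ν ∧
        x + eij * μ i * ν ≤ 1) :
    StrictAntiOn
      (fun ν => x + eij * μ i * ν - (1 - ε) * (ξ + eij * μ j * ν))
      (Set.Icc 0 νF) ∧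
    0 ≤ x + eij * μ i * νF - (1 - ε) * (ξ + eij * μ j * νF) ∧
    x + eij * μ i * νF - (1 - ε) * (ξ + eij * μ j * νF) ≤ x - (1 - ε) * ξ :=
  stmt_7_general m μ hμpos hμdec ε hε0 hεmax i j x ξ eij heij νF hνF0 hInT
end

section
/- Let μ_1 > μ_2 > 0 and σ_{12}, σ_{21} > 0. Define L_{22}(x,ξ) = ξ √(σ_{12}σ_{21}/(μ_2(x−ξ)(μ_1x − μ_2ξ))) J_1(w) and L_{21}(x,ξ) = (σ_{21}ξ/(μ_1x − μ_2ξ)) J_0(w) + μ_1 √(σ_{21}μ_2(x−ξ)/(σ_{12}(μ_1x − μ_2ξ)^3)) J_1(w), with w = (2/(μ_1−μ_2)) √(σ_{12}σ_{21}(x−ξ)(μ_1x − μ_2ξ)/μ_2). Then on the triangle {0 ≤ ξ ≤ x ≤ 1} these satisfy μ_2 ∂_x L_{21} + μ_1 ∂_ξ L_{21} = σ_{21} L_{22} and μ_2 ∂_x L_{22} + μ_2 ∂_ξ L_{22} = σ_{12} L_{21}, with L_{22}(x,0) = 0 and L_{21}(x,x) = σ_{21}/(μ_1 − μ_2). -/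
/-- Bessel function of the first kind, order 0. -/
noncomputable def besselJ0 (z : ℝ) : ℝ :=
  ∑' k : ℕ, (-1 : ℝ) ^ k * (z / 2) ^ (2 * k) / ((Nat.factorial k : ℝ) ^ 2)

/-- Bessel function of the first kind, order 1. -/
noncomputable def besselJ1 (z : ℝ) : ℝ :=
  ∑' k : ℕ, (-1 : ℝ) ^ k * (z / 2) ^ (2 * k + 1) /
    ((Nat.factorial k : ℝ) * (Nat.factorial (k + 1) : ℝ))


open Filter

lemma summable_coeff_mul_pow {c : ℕ → ℝ} (hc : ∀ k, |c k| ≤ 1 / (Nat.factorial k : ℝ))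
    (t : ℝ) : Summable fun k => c k * t ^ k := by
  apply Summable.of_norm
  refine Summable.of_nonneg_of_le (fun k => norm_nonneg _) (fun k => ?_)
    (Real.summable_pow_div_factorial |t|)
  rw [norm_mul, norm_pow, Real.norm_eq_abs, Real.norm_eq_abs]
  calc |c k| * |t| ^ k ≤ (1 / (Nat.factorial k : ℝ)) * |t| ^ k :=
        mul_le_mul_of_nonneg_right (hc k) (pow_nonneg (abs_nonneg t) k)
    _ = |t| ^ k / (Nat.factorial k : ℝ) := by ring

lemma deriv_term_bound {c : ℕ → ℝ} (hc : ∀ k, |c k| ≤ 1 / (Nat.factorial k : ℝ))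
    {R y : ℝ} (hR : 1 ≤ R) (hy : |y| ≤ R) (k : ℕ) :
    ‖(k : ℝ) * c k * y ^ (k - 1)‖ ≤ (2 * R) ^ k / (Nat.factorial k : ℝ) := by
  have hR0 : (0:ℝ) ≤ R := le_trans zero_le_one hR
  rw [Real.norm_eq_abs, abs_mul, abs_mul, abs_pow, Nat.abs_cast]
  have h1 : |y| ^ (k - 1) ≤ R ^ (k - 1) := pow_le_pow_left₀ (abs_nonneg y) hy _
  have h2 : R ^ (k - 1) ≤ R ^ k := pow_le_pow_right₀ hR (Nat.sub_le k 1)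
  have h3 : (k : ℝ) ≤ 2 ^ k := by exact_mod_cast (Nat.lt_two_pow_self (n := k)).le
  calc (k : ℝ) * |c k| * |y| ^ (k - 1)
      ≤ (2:ℝ) ^ k * (1 / (Nat.factorial k : ℝ)) * R ^ k := by
        apply mul_le_mul
        · exact mul_le_mul h3 (hc k) (abs_nonneg _) (by positivity)
        · exact le_trans h1 h2
        · positivity
        · positivity
    _ = (2 * R) ^ k / (Nat.factorial k : ℝ) := by rw [mul_pow]; ring

lemma summable_deriv_coeff {c : ℕ → ℝ} (hc : ∀ k, |c k| ≤ 1 / (Nat.factorial k : ℝ))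
    (t : ℝ) : Summable fun k : ℕ => (k : ℝ) * c k * t ^ (k - 1) := by
  apply Summable.of_norm
  refine Summable.of_nonneg_of_le (fun k => norm_nonneg _)
    (fun k => deriv_term_bound hc (R := |t| + 1) (by nlinarith [abs_nonneg t])
      (by nlinarith [abs_nonneg t]) k) ?_
  exact Real.summable_pow_div_factorial _

lemma hasDerivAt_series {c : ℕ → ℝ} (hc : ∀ k, |c k| ≤ 1 / (Nat.factorial k : ℝ))
    (t : ℝ) :
    HasDerivAt (fun s : ℝ => ∑' k : ℕ, c k * s ^ k)
      (∑' k : ℕ, (k : ℝ) * c k * t ^ (k - 1)) t := by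
  have hR1 : (1:ℝ) ≤ |t| + 1 := by nlinarith [abs_nonneg t]
  have htmem : t ∈ Metric.ball (0:ℝ) (|t| + 1) := by
    rw [Metric.mem_ball, Real.dist_eq, sub_zero]
    linarith
  have hterm : ∀ (n : ℕ) (y : ℝ),
      HasDerivAt (fun s : ℝ => c n * s ^ n) ((n : ℝ) * c n * y ^ (n - 1)) y := by
    intro n y
    have h := (hasDerivAt_pow n y).const_mul (c n)
    exact h.congr_deriv (by ring)
  refine hasDerivAt_tsum_of_isPreconnected
    (u := fun k => (2 * (|t| + 1)) ^ k / (Nat.factorial k : ℝ))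
    (g := fun n y => c n * y ^ n)
    (g' := fun n y => (n : ℝ) * c n * y ^ (n - 1))
    (Real.summable_pow_div_factorial _)
    (Metric.isOpen_ball) (convex_ball (0:ℝ) (|t| + 1)).isPreconnected
    (fun n y _ => hterm n y) (fun n y hy => ?_) htmem (summable_coeff_mul_pow hc t) htmem
  refine deriv_term_bound hc hR1 ?_ n
  have : |y| < |t| + 1 := by
    rw [Metric.mem_ball, Real.dist_eq, sub_zero] at hy
    exact hy
  exact this.le

noncomputable def agC (k : ℕ) : ℝ :=
  (-1) ^ k / (4 ^ k * (Nat.factorial k : ℝ) * (Nat.factorial (k + 1) : ℝ))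

noncomputable def bhC (k : ℕ) : ℝ :=
  (-1) ^ k / (4 ^ k * (Nat.factorial k : ℝ) ^ 2)

noncomputable def gg (t : ℝ) : ℝ := ∑' k : ℕ, agC k * t ^ k
noncomputable def hh (t : ℝ) : ℝ := ∑' k : ℕ, bhC k * t ^ k
noncomputable def Dgg (t : ℝ) : ℝ := ∑' k : ℕ, (k : ℝ) * agC k * t ^ (k - 1)
noncomputable def Dhh (t : ℝ) : ℝ := ∑' k : ℕ, (k : ℝ) * bhC k * t ^ (k - 1)

lemma factR_pos (k : ℕ) : (0:ℝ) < (Nat.factorial k : ℝ) := by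
  exact_mod_cast Nat.factorial_pos k

lemma factR_one_le (k : ℕ) : (1:ℝ) ≤ (Nat.factorial k : ℝ) := by
  exact_mod_cast Nat.one_le_iff_ne_zero.mpr (Nat.factorial_ne_zero k)

lemma agC_abs : ∀ k, |agC k| ≤ 1 / (Nat.factorial k : ℝ) := by
  intro k
  have h4 : (1:ℝ) ≤ 4 ^ k := one_le_pow₀ (by norm_num)
  have hf := factR_pos k
  have hf1 := factR_one_le (k + 1)
  rw [agC, abs_div, abs_pow, abs_neg, abs_one, one_pow,
    abs_of_pos (by positivity : (0:ℝ) < 4 ^ k * (Nat.factorial k : ℝ) * (Nat.factorial (k+1) : ℝ))]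
  apply one_div_le_one_div_of_le hf
  calc (Nat.factorial k : ℝ) = 1 * (Nat.factorial k : ℝ) := (one_mul _).symm
    _ ≤ 4 ^ k * (Nat.factorial k : ℝ) := mul_le_mul_of_nonneg_right h4 hf.le
    _ ≤ 4 ^ k * (Nat.factorial k : ℝ) * (Nat.factorial (k+1) : ℝ) :=
        le_mul_of_one_le_right (by positivity) hf1

lemma bhC_abs : ∀ k, |bhC k| ≤ 1 / (Nat.factorial k : ℝ) := by
  intro k
  have h4 : (1:ℝ) ≤ 4 ^ k := one_le_pow₀ (by norm_num)
  have hf := factR_pos k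
  have hf1 := factR_one_le k
  rw [bhC, abs_div, abs_pow, abs_neg, abs_one, one_pow,
    abs_of_pos (by positivity : (0:ℝ) < 4 ^ k * (Nat.factorial k : ℝ) ^ 2)]
  apply one_div_le_one_div_of_le hf
  nlinarith

lemma agC_mul_abs : ∀ k : ℕ, |(k : ℝ) * agC k| ≤ 1 / (Nat.factorial k : ℝ) := by
  intro k
  have h4 : (k:ℝ) ≤ 4 ^ k := by
    calc (k:ℝ) ≤ 2 ^ k := by exact_mod_cast (Nat.lt_two_pow_self (n := k)).le
    _ ≤ 4 ^ k := by apply pow_le_pow_left₀ <;> norm_num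
  have hk0 : (0:ℝ) ≤ (k:ℝ) := Nat.cast_nonneg k
  have hf := factR_pos k
  have hf1 := factR_one_le (k + 1)
  have h4p : (0:ℝ) < 4 ^ k := by positivity
  rw [abs_mul, Nat.abs_cast, agC, abs_div, abs_pow, abs_neg, abs_one, one_pow,
    abs_of_pos (by positivity : (0:ℝ) < 4 ^ k * (Nat.factorial k : ℝ) * (Nat.factorial (k+1) : ℝ))]
  rw [mul_one_div, div_le_div_iff₀ (by positivity) hf]
  calc (k:ℝ) * (Nat.factorial k : ℝ) ≤ 4 ^ k * (Nat.factorial k : ℝ) :=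
        mul_le_mul_of_nonneg_right h4 hf.le
    _ ≤ 4 ^ k * (Nat.factorial k : ℝ) * (Nat.factorial (k+1) : ℝ) :=
        le_mul_of_one_le_right (by positivity) hf1
    _ = 1 * (4 ^ k * (Nat.factorial k : ℝ) * (Nat.factorial (k+1) : ℝ)) := (one_mul _).symm

lemma hasDerivAt_gg (t : ℝ) : HasDerivAt gg (Dgg t) t := hasDerivAt_series agC_abs t
lemma hasDerivAt_hh (t : ℝ) : HasDerivAt hh (Dhh t) t := hasDerivAt_series bhC_abs t

lemma factR_succ (k : ℕ) :
    (Nat.factorial (k + 1) : ℝ) = ((k : ℝ) + 1) * (Nat.factorial k : ℝ) := by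
  rw [Nat.factorial_succ]; push_cast; ring

lemma gg_hh (t : ℝ) : gg t + t * Dgg t = hh t := by
  have h1 : t * Dgg t = ∑' k : ℕ, (k : ℝ) * agC k * t ^ k := by
    rw [Dgg, ← tsum_mul_left]
    refine tsum_congr fun k => ?_
    rcases k with _ | n
    · simp
    · simp only [Nat.add_sub_cancel]
      push_cast
      rw [pow_succ]
      ring
  rw [h1, gg, ← Summable.tsum_add (summable_coeff_mul_pow agC_abs t)
    (summable_coeff_mul_pow agC_mul_abs t), hh]
  refine tsum_congr fun k => ?_
  have hkey : agC k + (k : ℝ) * agC k = bhC k := by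
    have hf := (factR_pos k).ne'
    have h4 : ((4:ℝ) ^ k) ≠ 0 := by positivity
    have hk1 : ((k:ℝ) + 1) ≠ 0 := by positivity
    rw [agC, bhC, factR_succ]
    field_simp
    ring
  calc agC k * t ^ k + (k : ℝ) * agC k * t ^ k = (agC k + (k : ℝ) * agC k) * t ^ k := by ring
    _ = bhC k * t ^ k := by rw [hkey]

lemma Dhh_gg (t : ℝ) : Dhh t = -(1/4) * gg t := by
  rw [Dhh, Summable.tsum_eq_zero_add (summable_deriv_coeff bhC_abs t)]
  have h0 : (0 : ℝ) * bhC 0 * t ^ (0 - 1) = 0 := by norm_num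
  rw [show ((0:ℕ) : ℝ) * bhC 0 * t ^ (0 - 1) = 0 by norm_num, zero_add]
  have hterm : ∀ k : ℕ, ((k + 1 : ℕ) : ℝ) * bhC (k + 1) * t ^ (k + 1 - 1)
      = -(1/4) * (agC k * t ^ k) := by
    intro k
    have hf := (factR_pos k).ne'
    have h4 : ((4:ℝ) ^ k) ≠ 0 := by positivity
    have hk1 : ((k:ℝ) + 1) ≠ 0 := by positivity
    simp only [Nat.add_sub_cancel]
    rw [bhC, agC, factR_succ]
    push_cast
    rw [pow_succ]
    field_simp
    ring
  rw [tsum_congr hterm, tsum_mul_left, gg]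

lemma besselJ0_eq (z : ℝ) : besselJ0 z = hh (z ^ 2) := by
  rw [besselJ0, hh]
  refine tsum_congr fun k => ?_
  rw [bhC, pow_mul, div_pow]
  have h22 : ((z:ℝ)^2 / 2 ^ 2) ^ k = (z ^ 2) ^ k / 4 ^ k := by
    rw [div_pow]; norm_num
  rw [h22]
  ring

lemma besselJ1_eq (z : ℝ) : besselJ1 z = (z / 2) * gg (z ^ 2) := by
  rw [besselJ1, gg, ← tsum_mul_left]
  refine tsum_congr fun k => ?_
  rw [agC, pow_succ, pow_mul, div_pow]
  have h22 : ((z:ℝ)^2 / 2 ^ 2) ^ k = (z ^ 2) ^ k / 4 ^ k := by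
    rw [div_pow]; norm_num
  rw [h22]
  ring

lemma besselJ0_zero : besselJ0 0 = 1 := by
  rw [besselJ0_eq]
  have : hh (0 ^ 2 : ℝ) = hh 0 := by norm_num
  rw [this, hh]
  rw [tsum_eq_single 0 (fun k hk => by simp [zero_pow hk])]
  simp [bhC, Nat.factorial]

lemma besselJ1_zero : besselJ1 0 = 0 := by
  rw [besselJ1_eq]; simp

set_option maxHeartbeats 1000000 in
/-- The explicit kernels L₂₁, L₂₂ (in terms of Bessel functions J₀, J₁) satisfy
the coupled hyperbolic kernel PDEs μ₂∂ₓL₂₁ + μ₁∂_ξL₂₁ = σ₂₁L₂₂ and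
μ₂∂ₓL₂₂ + μ₂∂_ξL₂₂ = σ₁₂L₂₁ on the triangle {0 ≤ ξ ≤ x ≤ 1}, with
L₂₂(x,0) = 0 and L₂₁(x,x) = σ₂₁/(μ₁-μ₂). -/
theorem stmt_11 (μ1 μ2 σ12 σ21 : ℝ) (hμ : μ1 > μ2) (hμ2 : μ2 > 0)
    (hσ12 : 0 < σ12) (hσ21 : 0 < σ21)
    (L21 L22 : ℝ → ℝ → ℝ)
    (hL21 : ∀ x ξ : ℝ, L21 x ξ =
      (σ21 * ξ / (μ1 * x - μ2 * ξ)) *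
        besselJ0 ((2 / (μ1 - μ2)) *
          Real.sqrt (σ12 * σ21 * (x - ξ) * (μ1 * x - μ2 * ξ) / μ2)) +
      μ1 * Real.sqrt (σ21 * μ2 * (x - ξ) / (σ12 * (μ1 * x - μ2 * ξ) ^ 3)) *
        besselJ1 ((2 / (μ1 - μ2)) *
          Real.sqrt (σ12 * σ21 * (x - ξ) * (μ1 * x - μ2 * ξ) / μ2)))
    (hL22 : ∀ x ξ : ℝ, L22 x ξ =
      ξ * Real.sqrt (σ12 * σ21 / (μ2 * (x - ξ) * (μ1 * x - μ2 * ξ))) *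
        besselJ1 ((2 / (μ1 - μ2)) *
          Real.sqrt (σ12 * σ21 * (x - ξ) * (μ1 * x - μ2 * ξ) / μ2))) :
    (∃ L21x L21ξ L22x L22ξ : ℝ → ℝ → ℝ,
      ∀ x ξ : ℝ, 0 < ξ → ξ < x → x < 1 →
        HasDerivAt (fun y => L21 y ξ) (L21x x ξ) x ∧
        HasDerivAt (fun z => L21 x z) (L21ξ x ξ) ξ ∧
        HasDerivAt (fun y => L22 y ξ) (L22x x ξ) x ∧
        HasDerivAt (fun z => L22 x z) (L22ξ x ξ) ξ ∧
        μ2 * L21x x ξ + μ1 * L21ξ x ξ = σ21 * L22 x ξ ∧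
        μ2 * L22x x ξ + μ2 * L22ξ x ξ = σ12 * L21 x ξ) ∧
    (∀ x : ℝ, L22 x 0 = 0) ∧
    (∀ x : ℝ, 0 < x → L21 x x = σ21 / (μ1 - μ2)) := by
  have hμd : (0:ℝ) < μ1 - μ2 := sub_pos.mpr hμ
  have hμdne : μ1 - μ2 ≠ 0 := ne_of_gt hμd
  have hμ2ne : μ2 ≠ 0 := ne_of_gt hμ2
  have hσ12ne : σ12 ≠ 0 := ne_of_gt hσ12
  have hσ21ne : σ21 ≠ 0 := ne_of_gt hσ21
  obtain ⟨c, hc⟩ : ∃ c : ℝ, c = 4 * σ12 * σ21 / (μ2 * (μ1 - μ2) ^ 2) := ⟨_, rfl⟩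
  obtain ⟨K, hKdef⟩ : ∃ K : ℝ, K = σ12 * σ21 / μ2 / (μ1 - μ2) := ⟨_, rfl⟩
  obtain ⟨A, hAdef⟩ : ∃ A : ℝ, A = μ1 * σ21 / (μ1 - μ2) := ⟨_, rfl⟩
  have hv : ∀ {x ξ : ℝ}, 0 < ξ → ξ < x → 0 < μ1 * x - μ2 * ξ := by
    intro x ξ h1 h2; nlinarith
  have hw2 : ∀ x ξ : ℝ, 0 < ξ → ξ < x →
      ((2 / (μ1 - μ2)) * Real.sqrt (σ12 * σ21 * (x - ξ) * (μ1 * x - μ2 * ξ) / μ2)) ^ 2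
        = c * ((x - ξ) * (μ1 * x - μ2 * ξ)) := by
    intro x ξ h1 h2
    have h3 : 0 < x - ξ := sub_pos.mpr h2
    have hvp := hv h1 h2
    have hE : (0:ℝ) ≤ σ12 * σ21 * (x - ξ) * (μ1 * x - μ2 * ξ) / μ2 :=
      le_of_lt (div_pos (by positivity) hμ2)
    rw [mul_pow, Real.sq_sqrt hE, hc]
    field_simp
    ring
  have hL22' : ∀ x ξ : ℝ, 0 < ξ → ξ < x →
      L22 x ξ = K * ξ * gg (c * ((x - ξ) * (μ1 * x - μ2 * ξ))) := by
    intro x ξ h1 h2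
    have h3 : 0 < x - ξ := sub_pos.mpr h2
    have hvp := hv h1 h2
    rw [hL22 x ξ, besselJ1_eq, hw2 x ξ h1 h2]
    have hA1 : (0:ℝ) ≤ σ12 * σ21 / (μ2 * (x - ξ) * (μ1 * x - μ2 * ξ)) :=
      le_of_lt (div_pos (by positivity) (by positivity))
    have key : Real.sqrt (σ12 * σ21 / (μ2 * (x - ξ) * (μ1 * x - μ2 * ξ)))
        * Real.sqrt (σ12 * σ21 * (x - ξ) * (μ1 * x - μ2 * ξ) / μ2) = σ12 * σ21 / μ2 := by
      rw [← Real.sqrt_mul hA1]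
      have heq : σ12 * σ21 / (μ2 * (x - ξ) * (μ1 * x - μ2 * ξ))
          * (σ12 * σ21 * (x - ξ) * (μ1 * x - μ2 * ξ) / μ2) = (σ12 * σ21 / μ2) ^ 2 := by
        have hvne : x * μ1 - μ2 * ξ ≠ 0 := (by linarith [mul_comm x μ1] : 0 < x * μ1 - μ2 * ξ).ne'
        field_simp
      rw [heq, Real.sqrt_sq (by positivity)]
    rw [hKdef]
    linear_combination (ξ * gg (c * ((x - ξ) * (μ1 * x - μ2 * ξ))) / (μ1 - μ2)) * key
  have hL21' : ∀ x ξ : ℝ, 0 < ξ → ξ < x →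
      L21 x ξ = σ21 * ξ / (μ1 * x - μ2 * ξ) * hh (c * ((x - ξ) * (μ1 * x - μ2 * ξ)))
        + A * ((x - ξ) / (μ1 * x - μ2 * ξ)) * gg (c * ((x - ξ) * (μ1 * x - μ2 * ξ))) := by
    intro x ξ h1 h2
    have h3 : 0 < x - ξ := sub_pos.mpr h2
    have hvp := hv h1 h2
    rw [hL21 x ξ, besselJ0_eq, besselJ1_eq, hw2 x ξ h1 h2]
    have hA1 : (0:ℝ) ≤ σ21 * μ2 * (x - ξ) / (σ12 * (μ1 * x - μ2 * ξ) ^ 3) :=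
      le_of_lt (div_pos (by positivity) (by positivity))
    have key : Real.sqrt (σ21 * μ2 * (x - ξ) / (σ12 * (μ1 * x - μ2 * ξ) ^ 3))
        * Real.sqrt (σ12 * σ21 * (x - ξ) * (μ1 * x - μ2 * ξ) / μ2)
        = σ21 * (x - ξ) / (μ1 * x - μ2 * ξ) := by
      rw [← Real.sqrt_mul hA1]
      have heq : σ21 * μ2 * (x - ξ) / (σ12 * (μ1 * x - μ2 * ξ) ^ 3)
          * (σ12 * σ21 * (x - ξ) * (μ1 * x - μ2 * ξ) / μ2)
          = (σ21 * (x - ξ) / (μ1 * x - μ2 * ξ)) ^ 2 := by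
        field_simp
      rw [heq, Real.sqrt_sq (by positivity)]
    rw [hAdef]
    linear_combination (μ1 * gg (c * ((x - ξ) * (μ1 * x - μ2 * ξ))) / (μ1 - μ2)) * key
  refine ⟨?_, ?_, ?_⟩
  · refine ⟨fun x ξ => -(σ21 * ξ * μ1) / (μ1 * x - μ2 * ξ) ^ 2 * hh (c * ((x - ξ) * (μ1 * x - μ2 * ξ)))
        + σ21 * ξ / (μ1 * x - μ2 * ξ) * Dhh (c * ((x - ξ) * (μ1 * x - μ2 * ξ)))
          * (c * ((μ1 * x - μ2 * ξ) + μ1 * (x - ξ)))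
        + A * ((μ1 - μ2) * ξ / (μ1 * x - μ2 * ξ) ^ 2 * gg (c * ((x - ξ) * (μ1 * x - μ2 * ξ)))
          + (x - ξ) / (μ1 * x - μ2 * ξ) * Dgg (c * ((x - ξ) * (μ1 * x - μ2 * ξ)))
          * (c * ((μ1 * x - μ2 * ξ) + μ1 * (x - ξ)))),
      fun x ξ => σ21 * μ1 * x / (μ1 * x - μ2 * ξ) ^ 2 * hh (c * ((x - ξ) * (μ1 * x - μ2 * ξ)))
        - σ21 * ξ / (μ1 * x - μ2 * ξ) * Dhh (c * ((x - ξ) * (μ1 * x - μ2 * ξ)))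
          * (c * ((μ1 * x - μ2 * ξ) + μ2 * (x - ξ)))
        + A * (-((μ1 - μ2) * x) / (μ1 * x - μ2 * ξ) ^ 2 * gg (c * ((x - ξ) * (μ1 * x - μ2 * ξ)))
          - (x - ξ) / (μ1 * x - μ2 * ξ) * Dgg (c * ((x - ξ) * (μ1 * x - μ2 * ξ)))
          * (c * ((μ1 * x - μ2 * ξ) + μ2 * (x - ξ)))),
      fun x ξ => K * ξ * Dgg (c * ((x - ξ) * (μ1 * x - μ2 * ξ)))
          * (c * ((μ1 * x - μ2 * ξ) + μ1 * (x - ξ))),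
      fun x ξ => K * gg (c * ((x - ξ) * (μ1 * x - μ2 * ξ)))
        - K * ξ * Dgg (c * ((x - ξ) * (μ1 * x - μ2 * ξ)))
          * (c * ((μ1 * x - μ2 * ξ) + μ2 * (x - ξ))), ?_⟩
    intro x ξ hξ hxξ hx1
    have h3 : 0 < x - ξ := sub_pos.mpr hxξ
    have hvp := hv hξ hxξ
    have hvne : μ1 * x - μ2 * ξ ≠ 0 := ne_of_gt hvp
    -- inner polynomial derivatives
    have hsx : HasDerivAt (fun y => c * ((y - ξ) * (μ1 * y - μ2 * ξ)))
        (c * ((μ1 * x - μ2 * ξ) + μ1 * (x - ξ))) x := by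
      have h1 : HasDerivAt (fun y : ℝ => (y - ξ) * (μ1 * y - μ2 * ξ))
          (1 * (μ1 * x - μ2 * ξ) + (x - ξ) * (μ1 * 1)) x :=
        ((hasDerivAt_id x).sub_const ξ).mul
          (((hasDerivAt_id x).const_mul μ1).sub_const (μ2 * ξ))
      have := h1.const_mul c
      rw [show c * ((μ1 * x - μ2 * ξ) + μ1 * (x - ξ))
        = c * (1 * (μ1 * x - μ2 * ξ) + (x - ξ) * (μ1 * 1)) from by ring]
      exact this
    have hsξ : HasDerivAt (fun z => c * ((x - z) * (μ1 * x - μ2 * z)))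
        (-(c * ((μ1 * x - μ2 * ξ) + μ2 * (x - ξ)))) ξ := by
      have h1 : HasDerivAt (fun z : ℝ => (x - z) * (μ1 * x - μ2 * z))
          ((-1) * (μ1 * x - μ2 * ξ) + (x - ξ) * (-(μ2 * 1))) ξ := by
        have ha : HasDerivAt (fun z : ℝ => x - z) (-1) ξ := by
          simpa using (hasDerivAt_id ξ).const_sub x
        have hb : HasDerivAt (fun z : ℝ => μ1 * x - μ2 * z) (-(μ2 * 1)) ξ :=
          ((hasDerivAt_id ξ).const_mul μ2).const_sub (μ1 * x)
        exact ha.mul hb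
      have := h1.const_mul c
      rw [show -(c * ((μ1 * x - μ2 * ξ) + μ2 * (x - ξ)))
        = c * ((-1) * (μ1 * x - μ2 * ξ) + (x - ξ) * (-(μ2 * 1))) from by ring]
      exact this
    -- x-derivative of L22
    have HD22x : HasDerivAt (fun y => K * ξ * gg (c * ((y - ξ) * (μ1 * y - μ2 * ξ))))
        (K * ξ * Dgg (c * ((x - ξ) * (μ1 * x - μ2 * ξ)))
          * (c * ((μ1 * x - μ2 * ξ) + μ1 * (x - ξ)))) x := by
      have := ((hasDerivAt_gg _).comp x hsx).const_mul (K * ξ)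
      rw [show K * ξ * Dgg (c * ((x - ξ) * (μ1 * x - μ2 * ξ)))
          * (c * ((μ1 * x - μ2 * ξ) + μ1 * (x - ξ)))
        = K * ξ * (Dgg (c * ((x - ξ) * (μ1 * x - μ2 * ξ)))
          * (c * ((μ1 * x - μ2 * ξ) + μ1 * (x - ξ)))) from by ring]
      exact this
    have E22x : HasDerivAt (fun y => L22 y ξ)
        (K * ξ * Dgg (c * ((x - ξ) * (μ1 * x - μ2 * ξ)))
          * (c * ((μ1 * x - μ2 * ξ) + μ1 * (x - ξ)))) x :=
      HD22x.congr_of_eventuallyEq (Filter.eventuallyEq_of_mem (Ioi_mem_nhds hxξ)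
        (fun y hy => hL22' y ξ hξ hy))
    -- ξ-derivative of L22
    have HD22ξ : HasDerivAt (fun z => K * z * gg (c * ((x - z) * (μ1 * x - μ2 * z))))
        (K * gg (c * ((x - ξ) * (μ1 * x - μ2 * ξ)))
          - K * ξ * Dgg (c * ((x - ξ) * (μ1 * x - μ2 * ξ)))
          * (c * ((μ1 * x - μ2 * ξ) + μ2 * (x - ξ)))) ξ := by
      have h1 : HasDerivAt (fun z : ℝ => K * z) (K * 1) ξ := (hasDerivAt_id ξ).const_mul K
      have := h1.mul ((hasDerivAt_gg _).comp ξ hsξ)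
      rw [show K * gg (c * ((x - ξ) * (μ1 * x - μ2 * ξ)))
          - K * ξ * Dgg (c * ((x - ξ) * (μ1 * x - μ2 * ξ)))
          * (c * ((μ1 * x - μ2 * ξ) + μ2 * (x - ξ)))
        = K * 1 * gg (c * ((x - ξ) * (μ1 * x - μ2 * ξ)))
          + K * ξ * (Dgg (c * ((x - ξ) * (μ1 * x - μ2 * ξ)))
          * -(c * ((μ1 * x - μ2 * ξ) + μ2 * (x - ξ)))) from by ring]
      exact this
    have E22ξ : HasDerivAt (fun z => L22 x z)
        (K * gg (c * ((x - ξ) * (μ1 * x - μ2 * ξ)))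
          - K * ξ * Dgg (c * ((x - ξ) * (μ1 * x - μ2 * ξ)))
          * (c * ((μ1 * x - μ2 * ξ) + μ2 * (x - ξ)))) ξ :=
      HD22ξ.congr_of_eventuallyEq (Filter.eventuallyEq_of_mem
        (Ioo_mem_nhds hξ hxξ) (fun z hz => hL22' x z hz.1 hz.2))
    -- x-derivative of L21
    have HD21x : HasDerivAt (fun y => σ21 * ξ / (μ1 * y - μ2 * ξ)
          * hh (c * ((y - ξ) * (μ1 * y - μ2 * ξ)))
        + A * ((y - ξ) / (μ1 * y - μ2 * ξ)) * gg (c * ((y - ξ) * (μ1 * y - μ2 * ξ))))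
        (-(σ21 * ξ * μ1) / (μ1 * x - μ2 * ξ) ^ 2 * hh (c * ((x - ξ) * (μ1 * x - μ2 * ξ)))
        + σ21 * ξ / (μ1 * x - μ2 * ξ) * Dhh (c * ((x - ξ) * (μ1 * x - μ2 * ξ)))
          * (c * ((μ1 * x - μ2 * ξ) + μ1 * (x - ξ)))
        + A * ((μ1 - μ2) * ξ / (μ1 * x - μ2 * ξ) ^ 2 * gg (c * ((x - ξ) * (μ1 * x - μ2 * ξ)))
          + (x - ξ) / (μ1 * x - μ2 * ξ) * Dgg (c * ((x - ξ) * (μ1 * x - μ2 * ξ)))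
          * (c * ((μ1 * x - μ2 * ξ) + μ1 * (x - ξ))))) x := by
      have hden : HasDerivAt (fun y : ℝ => μ1 * y - μ2 * ξ) (μ1 * 1) x :=
        ((hasDerivAt_id x).const_mul μ1).sub_const (μ2 * ξ)
      have hq1 : HasDerivAt (fun y : ℝ => σ21 * ξ / (μ1 * y - μ2 * ξ))
          ((0 * (μ1 * x - μ2 * ξ) - σ21 * ξ * (μ1 * 1)) / (μ1 * x - μ2 * ξ) ^ 2) x :=
        (hasDerivAt_const x (σ21 * ξ)).div hden hvne
      have hnum2 : HasDerivAt (fun y : ℝ => y - ξ) 1 x := (hasDerivAt_id x).sub_const ξ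
      have hq2 : HasDerivAt (fun y : ℝ => (y - ξ) / (μ1 * y - μ2 * ξ))
          ((1 * (μ1 * x - μ2 * ξ) - (x - ξ) * (μ1 * 1)) / (μ1 * x - μ2 * ξ) ^ 2) x :=
        hnum2.div hden hvne
      have hterm1 := hq1.mul ((hasDerivAt_hh _).comp x hsx)
      have hterm2 := (hq2.const_mul A).mul ((hasDerivAt_gg _).comp x hsx)
      have hD := hterm1.add hterm2
      have hvne' : x * μ1 - μ2 * ξ ≠ 0 := (by linarith [mul_comm x μ1] : 0 < x * μ1 - μ2 * ξ).ne'
      exact hD.congr_deriv (by simp only [Function.comp_apply]; field_simp; ring)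
    have E21x : HasDerivAt (fun y => L21 y ξ) _ x :=
      HD21x.congr_of_eventuallyEq (Filter.eventuallyEq_of_mem (Ioi_mem_nhds hxξ)
        (fun y hy => hL21' y ξ hξ hy))
    -- ξ-derivative of L21
    have HD21ξ : HasDerivAt (fun z => σ21 * z / (μ1 * x - μ2 * z)
          * hh (c * ((x - z) * (μ1 * x - μ2 * z)))
        + A * ((x - z) / (μ1 * x - μ2 * z)) * gg (c * ((x - z) * (μ1 * x - μ2 * z))))
        (σ21 * μ1 * x / (μ1 * x - μ2 * ξ) ^ 2 * hh (c * ((x - ξ) * (μ1 * x - μ2 * ξ)))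
        - σ21 * ξ / (μ1 * x - μ2 * ξ) * Dhh (c * ((x - ξ) * (μ1 * x - μ2 * ξ)))
          * (c * ((μ1 * x - μ2 * ξ) + μ2 * (x - ξ)))
        + A * (-((μ1 - μ2) * x) / (μ1 * x - μ2 * ξ) ^ 2 * gg (c * ((x - ξ) * (μ1 * x - μ2 * ξ)))
          - (x - ξ) / (μ1 * x - μ2 * ξ) * Dgg (c * ((x - ξ) * (μ1 * x - μ2 * ξ)))
          * (c * ((μ1 * x - μ2 * ξ) + μ2 * (x - ξ))))) ξ := by
      have hden : HasDerivAt (fun z : ℝ => μ1 * x - μ2 * z) (-(μ2 * 1)) ξ :=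
        ((hasDerivAt_id ξ).const_mul μ2).const_sub (μ1 * x)
      have hnum1 : HasDerivAt (fun z : ℝ => σ21 * z) (σ21 * 1) ξ :=
        (hasDerivAt_id ξ).const_mul σ21
      have hq1 : HasDerivAt (fun z : ℝ => σ21 * z / (μ1 * x - μ2 * z))
          ((σ21 * 1 * (μ1 * x - μ2 * ξ) - σ21 * ξ * (-(μ2 * 1))) / (μ1 * x - μ2 * ξ) ^ 2) ξ :=
        hnum1.div hden hvne
      have hnum2 : HasDerivAt (fun z : ℝ => x - z) (-1) ξ := by
        simpa using (hasDerivAt_id ξ).const_sub x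
      have hq2 : HasDerivAt (fun z : ℝ => (x - z) / (μ1 * x - μ2 * z))
          (((-1) * (μ1 * x - μ2 * ξ) - (x - ξ) * (-(μ2 * 1))) / (μ1 * x - μ2 * ξ) ^ 2) ξ :=
        hnum2.div hden hvne
      have hterm1 := hq1.mul ((hasDerivAt_hh _).comp ξ hsξ)
      have hterm2 := (hq2.const_mul A).mul ((hasDerivAt_gg _).comp ξ hsξ)
      have hD := hterm1.add hterm2
      have hvne' : x * μ1 - μ2 * ξ ≠ 0 := (by linarith [mul_comm x μ1] : 0 < x * μ1 - μ2 * ξ).ne'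
      exact hD.congr_deriv (by simp only [Function.comp_apply]; field_simp; ring)
    have E21ξ : HasDerivAt (fun z => L21 x z) _ ξ :=
      HD21ξ.congr_of_eventuallyEq (Filter.eventuallyEq_of_mem
        (Ioo_mem_nhds hξ hxξ) (fun z hz => hL21' x z hz.1 hz.2))
    refine ⟨E21x, E21ξ, E22x, E22ξ, ?_, ?_⟩
    · beta_reduce
      rw [hL22' x ξ hξ hxξ, ← gg_hh, Dhh_gg, hc, hKdef, hAdef]
      field_simp
      ring
    · beta_reduce
      rw [hL21' x ξ hξ hxξ, ← gg_hh, hc, hKdef, hAdef]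
      field_simp
      ring
  · intro x
    rw [hL22 x 0, zero_mul, zero_mul]
  · intro x hx
    rw [hL21 x x]
    have h0 : σ12 * σ21 * (x - x) * (μ1 * x - μ2 * x) / μ2 = 0 := by ring
    rw [h0, Real.sqrt_zero, mul_zero, besselJ0_zero, besselJ1_zero, mul_one, mul_zero, add_zero]
    have hvv : μ1 * x - μ2 * x = (μ1 - μ2) * x := by ring
    rw [hvv]
    field_simp
end
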